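/- arXiv:1805.11803 — 7 statements merged into one kernel-verified Lean document; each statement's English description precedes it below -/
import Mathlib

section
/- For any real symmetric n×n matrix W with largest eigenvalue ω₁ and smallest eigenvalue ωₙ, the spread satisfies s(W) = ω₁ - ωₙ ≤ sqrt(2‖W‖_F² - (2/n)(tr W)²), where ‖W‖_F is the Frobenius norm. -/
/-! In terms of the eigenvalues `λ` of `W`, `‖W‖_F² = ∑ λ²` and `tr W = ∑ λ`, so the radicand is
twice the sum of squared deviations of the `λ` from their mean `m`. For the extreme eigenvalues
`a, b` one has `(a - b)² ≤ 2((a - m)² + (b - m)²)`, which is at most twice that sum. -/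

open Matrix

/-- The spread of a Hermitian real matrix: largest minus smallest eigenvalue. -/
noncomputable def spread {n : ℕ} {A : Matrix (Fin n) (Fin n) ℝ} (hA : A.IsHermitian) : ℝ :=
  (⨆ i, hA.eigenvalues i) - ⨅ i, hA.eigenvalues i

open Finset

lemma sq_sub_le_two_mul_sum_sq_sub {ι : Type*} [Fintype ι] (f : ι → ℝ) (c : ℝ) (i j : ι) :
    (f i - f j) ^ 2 ≤ 2 * ∑ k, (f k - c) ^ 2 := by
  classical
  have hsum : ∀ s : Finset ι, ∑ k ∈ s, (f k - c) ^ 2 ≤ ∑ k, (f k - c) ^ 2 := fun s =>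
    sum_le_univ_sum_of_nonneg fun k => sq_nonneg _
  rcases eq_or_ne i j with rfl | hij
  · simpa using hsum ∅
  · have hpair := hsum {i, j}
    rw [sum_pair hij] at hpair
    nlinarith [sq_nonneg (f i + f j - 2 * c)]

lemma sum_sq_sub_mean {ι : Type*} [Fintype ι] [Nonempty ι] (f : ι → ℝ) :
    ∑ k, (f k - (∑ l, f l) / Fintype.card ι) ^ 2 =
      ∑ k, f k ^ 2 - (∑ k, f k) ^ 2 / Fintype.card ι := by
  have hcard : (Fintype.card ι : ℝ) ≠ 0 := Nat.cast_ne_zero.mpr Fintype.card_ne_zero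
  simp only [sub_sq, sum_add_distrib, sum_sub_distrib, ← sum_mul, ← mul_sum, sum_const,
    card_univ, nsmul_eq_mul]
  field_simp
  ring

lemma Matrix.sum_sq_entries_eq_trace_transpose_mul {m n : Type*} [Fintype m] [Fintype n]
    (A : Matrix m n ℝ) : ∑ i, ∑ j, A i j ^ 2 = (Aᵀ * A).trace := by
  simp only [trace, diag_apply, mul_apply, transpose_apply, sq]
  exact sum_comm

lemma Matrix.IsHermitian.trace_mul_self_eq_sum_sq_eigenvalues {𝕜 n : Type*} [RCLike 𝕜]
    [Fintype n] [DecidableEq n] {A : Matrix n n 𝕜} (hA : A.IsHermitian) :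
    (A * A).trace = ∑ i, ((hA.eigenvalues i ^ 2 : ℝ) : 𝕜) := by
  conv_lhs => rw [← sq, hA.spectral_theorem, ← map_pow, Unitary.conjStarAlgAut_apply,
    trace_mul_cycle, Unitary.coe_star_mul_self, one_mul, diagonal_pow, trace_diagonal]
  simp

theorem mirsky_upper_bound {n : ℕ} (hn : 1 ≤ n)
    (W : Matrix (Fin n) (Fin n) ℝ) (hW : W.IsHermitian) :
    spread hW ≤ Real.sqrt (2 * (∑ i, ∑ j, (W i j) ^ 2) - (2 / n) * (Matrix.trace W) ^ 2) := by
  have : Nonempty (Fin n) := ⟨⟨0, hn⟩⟩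
  set f := hW.eigenvalues
  have hfrob : ∑ i, ∑ j, W i j ^ 2 = ∑ k, f k ^ 2 := by
    rw [sum_sq_entries_eq_trace_transpose_mul, ← conjTranspose_eq_transpose_of_trivial, hW.eq,
      hW.trace_mul_self_eq_sum_sq_eigenvalues]
    simp [f]
  have htr : W.trace = ∑ k, f k := by simpa using hW.trace_eq_sum_eigenvalues
  obtain ⟨i, hi⟩ := exists_eq_ciSup_of_finite (f := f)
  obtain ⟨j, hj⟩ := exists_eq_ciInf_of_finite (f := f)
  have hdev := sq_sub_le_two_mul_sum_sq_sub f ((∑ k, f k) / Fintype.card (Fin n)) i j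
  rw [sum_sq_sub_mean, Fintype.card_fin] at hdev
  rw [spread, ← hi, ← hj, hfrob, htr]
  exact (le_abs_self _).trans (Real.abs_le_sqrt (hdev.trans_eq (by ring)))
end

section
/- For any real symmetric n×n matrix A and any unit vector x in R^n, the spread of A satisfies s(A) ≥ 2‖Ax - (xᵀAx)x‖. -/
open Matrix

lemma udot {n : ℕ} (U : Matrix (Fin n) (Fin n) ℝ) (hU : Uᵀ * U = 1) (v w : Fin n → ℝ) :
    (U *ᵥ v) ⬝ᵥ (U *ᵥ w) = v ⬝ᵥ w := by
  rw [Matrix.dotProduct_mulVec, ← Matrix.vecMul_transpose, Matrix.vecMul_vecMul, hU,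
    Matrix.vecMul_one]

lemma keyineq {n : ℕ} (lam c : Fin n → ℝ) (hc : ∑ i, c i ^ 2 = 1) :
    2 * Real.sqrt (∑ i, (lam i - ∑ j, lam j * c j ^ 2) ^ 2 * c i ^ 2)
      ≤ (⨆ i, lam i) - ⨅ i, lam i := by
  have hn : Nonempty (Fin n) := by
    by_contra h
    simp [not_nonempty_iff.mp h] at hc
  set r := ∑ j, lam j * c j ^ 2 with hr
  set M := ⨆ i, lam i with hM
  set L := ⨅ i, lam i with hL
  have hle : ∀ i, L ≤ lam i ∧ lam i ≤ M := fun i =>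
    ⟨ciInf_le (Set.Finite.bddBelow (Set.finite_range _)) i,
     le_ciSup (Set.Finite.bddAbove (Set.finite_range _)) i⟩
  set m := (M + L) / 2 with hm
  have h1 : ∑ i, (lam i - r) ^ 2 * c i ^ 2
      = ∑ i, (lam i - m) ^ 2 * c i ^ 2 - (m - r) ^ 2 := by
    have e1 : ∀ i ∈ Finset.univ, (lam i - r) ^ 2 * c i ^ 2 =
        (lam i - m) ^ 2 * c i ^ 2 + (2 * (m - r)) * (lam i * c i ^ 2)
          + ((m - r) ^ 2 - 2 * (m - r) * m) * c i ^ 2 := fun i _ => by ring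
    rw [Finset.sum_congr rfl e1, Finset.sum_add_distrib, Finset.sum_add_distrib,
      ← Finset.mul_sum, ← Finset.mul_sum, hc, ← hr]
    ring
  have h2 : ∑ i, (lam i - m) ^ 2 * c i ^ 2 ≤ ((M - L) / 2) ^ 2 := by
    calc ∑ i, (lam i - m) ^ 2 * c i ^ 2 ≤ ∑ i, ((M - L) / 2) ^ 2 * c i ^ 2 := by
          refine Finset.sum_le_sum fun i _ => mul_le_mul_of_nonneg_right ?_ (sq_nonneg _)
          refine sq_le_sq' ?_ ?_
          · have := (hle i).1; simp only [hm]; linarith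
          · have := (hle i).2; simp only [hm]; linarith
      _ = ((M - L) / 2) ^ 2 := by rw [← Finset.mul_sum, hc, mul_one]
  have hML : L ≤ M := le_trans (hle (Classical.arbitrary _)).1 (hle (Classical.arbitrary _)).2
  have h3 : ∑ i, (lam i - r) ^ 2 * c i ^ 2 ≤ ((M - L) / 2) ^ 2 := by
    rw [h1]; nlinarith [sq_nonneg (m - r)]
  have h4 : Real.sqrt (∑ i, (lam i - r) ^ 2 * c i ^ 2) ≤ (M - L) / 2 := by
    calc Real.sqrt (∑ i, (lam i - r) ^ 2 * c i ^ 2) ≤ Real.sqrt (((M - L) / 2) ^ 2) :=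
          Real.sqrt_le_sqrt h3
      _ = (M - L) / 2 := Real.sqrt_sq (by linarith)
  linarith


theorem spread_ge_two_norm {n : ℕ} (A : Matrix (Fin n) (Fin n) ℝ) (hA : A.IsHermitian)
    (x : Fin n → ℝ) (hx : ∑ i, (x i) ^ 2 = 1) :
    spread hA ≥ 2 * Real.sqrt (∑ i, (A.mulVec x i - (x ⬝ᵥ A.mulVec x) * x i) ^ 2) := by
  unfold spread
  set U : Matrix (Fin n) (Fin n) ℝ := (hA.eigenvectorUnitary : Matrix (Fin n) (Fin n) ℝ) with hUdef
  have hU1 : Uᵀ * U = 1 := by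
    have := Unitary.coe_star_mul_self hA.eigenvectorUnitary
    simpa [hUdef, Matrix.star_eq_conjTranspose, Matrix.conjTranspose_eq_transpose_of_trivial]
      using this
  have hU2 : U * Uᵀ = 1 := by
    have := Unitary.coe_mul_star_self hA.eigenvectorUnitary
    simpa [hUdef, Matrix.star_eq_conjTranspose, Matrix.conjTranspose_eq_transpose_of_trivial]
      using this
  set lam := hA.eigenvalues with hlam
  set c : Fin n → ℝ := Uᵀ *ᵥ x with hc
  have hxc : x = U *ᵥ c := by
    rw [hc, Matrix.mulVec_mulVec, hU2, Matrix.one_mulVec]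
  have hspec : A = U * Matrix.diagonal lam * Uᵀ := by
    have := hA.spectral_theorem
    simpa [hUdef, Matrix.star_eq_conjTranspose, Matrix.conjTranspose_eq_transpose_of_trivial,
      Function.comp] using this
  have hDc : Matrix.diagonal lam *ᵥ c = fun i => lam i * c i := by
    funext i; simp [Matrix.mulVec_diagonal]
  have hAx : A *ᵥ x = U *ᵥ (fun i => lam i * c i) := by
    calc A *ᵥ x = (U * Matrix.diagonal lam * Uᵀ) *ᵥ x := by rw [← hspec]
      _ = (U * Matrix.diagonal lam) *ᵥ (Uᵀ *ᵥ x) := (Matrix.mulVec_mulVec x _ _).symm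
      _ = U *ᵥ (Matrix.diagonal lam *ᵥ c) := by rw [← hc, ← Matrix.mulVec_mulVec c U _]
      _ = U *ᵥ (fun i => lam i * c i) := by rw [hDc]
  have hcnorm : ∑ i, c i ^ 2 = 1 := by
    have : c ⬝ᵥ c = x ⬝ᵥ x := by
      rw [hxc]; exact (udot U hU1 c c).symm
    simp only [dotProduct, ← sq] at this
    rw [this, hx]
  have hrval : x ⬝ᵥ A *ᵥ x = ∑ j, lam j * c j ^ 2 := by
    rw [hAx, hxc, udot U hU1]
    simp [dotProduct, sq]
    exact Finset.sum_congr rfl fun i _ => by ring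
  have hrdef : True := trivial
  have hsum : ∑ i, (A.mulVec x i - (x ⬝ᵥ A *ᵥ x) * x i) ^ 2 = ∑ i, (lam i - (x ⬝ᵥ A *ᵥ x)) ^ 2 * c i ^ 2 := by
    have hvec : (fun i => A.mulVec x i - (x ⬝ᵥ A *ᵥ x) * x i) = U *ᵥ (fun i => (lam i - (x ⬝ᵥ A *ᵥ x)) * c i) := by
      funext i
      rw [hAx, hxc]
      simp [Matrix.mulVec, dotProduct, Finset.mul_sum, Finset.sum_sub_distrib]
      rw [← Finset.sum_sub_distrib]
      exact Finset.sum_congr rfl fun j _ => by ring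
    have : (fun i => A.mulVec x i - (x ⬝ᵥ A *ᵥ x) * x i) ⬝ᵥ (fun i => A.mulVec x i - (x ⬝ᵥ A *ᵥ x) * x i)
        = (fun i => (lam i - (x ⬝ᵥ A *ᵥ x)) * c i) ⬝ᵥ (fun i => (lam i - (x ⬝ᵥ A *ᵥ x)) * c i) := by
      rw [hvec]; exact udot U hU1 _ _
    simp only [dotProduct] at this
    calc ∑ i, (A.mulVec x i - (x ⬝ᵥ A *ᵥ x) * x i) ^ 2
        = ∑ i, (A.mulVec x i - (x ⬝ᵥ A *ᵥ x) * x i) * (A.mulVec x i - (x ⬝ᵥ A *ᵥ x) * x i) := by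
          exact Finset.sum_congr rfl fun i _ => sq (A.mulVec x i - (x ⬝ᵥ A *ᵥ x) * x i) ▸ by ring
      _ = ∑ i, ((lam i - (x ⬝ᵥ A *ᵥ x)) * c i) * ((lam i - (x ⬝ᵥ A *ᵥ x)) * c i) := this
      _ = ∑ i, (lam i - (x ⬝ᵥ A *ᵥ x)) ^ 2 * c i ^ 2 := Finset.sum_congr rfl fun i _ => by ring
  rw [ge_iff_le, hsum, hrval]
  exact keyineq lam c hcnorm
end

section
/- Let G be a simple graph with n vertices, signless Laplacian Q = D + A, adjacency spread s(G) = λ₁ - λₙ, maximum degree Δ and minimum degree δ. Then |Δ - δ - s(G)| ≤ s_Q(G) ≤ s(G) + Δ - δ, where s_Q(G) is the spread of Q. -/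
open Matrix

/-- The signless Laplacian matrix Q = D + A of a simple graph. -/
noncomputable def signlessLaplacian {n : ℕ} (G : SimpleGraph (Fin n)) [DecidableRel G.Adj] :
    Matrix (Fin n) (Fin n) ℝ :=
  Matrix.diagonal (fun i => (G.degree i : ℝ)) + G.adjMatrix ℝ

/-!
The extreme eigenvalues of a real symmetric matrix are the extreme values of its Rayleigh
quotient `xᵀMx / xᵀx`. Since `Q = D + A` and the Rayleigh quotient of `D` lies in `[δ, Δ]`,
testing the Rayleigh quotients at extremal eigenvectors gives `λ₁ + δ ≤ q₁ ≤ λ₁ + Δ` and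
`λₙ + δ ≤ qₙ ≤ λₙ + Δ`, whence `s - (Δ - δ) ≤ s_Q ≤ s + (Δ - δ)`. Testing the Rayleigh quotient
of `Q` at standard basis vectors gives `qₙ ≤ δ ≤ Δ ≤ q₁`, so `s_Q ≥ Δ - δ ≥ Δ - δ - s`.
-/

open Finset

namespace Matrix.IsHermitian

variable {ι : Type*} [Fintype ι] [DecidableEq ι] {M N : Matrix ι ι ℝ}

theorem vecMul_eigenvectorUnitary (hM : M.IsHermitian) (x : ι → ℝ) :
    x ᵥ* (hM.eigenvectorUnitary : Matrix ι ι ℝ) =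
      star (hM.eigenvectorUnitary : Matrix ι ι ℝ) *ᵥ x := by
  rw [star_eq_conjTranspose, conjTranspose_eq_transpose_of_trivial, mulVec_transpose]

theorem dotProduct_mulVec_eq_sum_eigenvalues (hM : M.IsHermitian) (x : ι → ℝ) :
    x ⬝ᵥ M *ᵥ x =
      ∑ i, hM.eigenvalues i * (star (hM.eigenvectorUnitary : Matrix ι ι ℝ) *ᵥ x) i ^ 2 := by
  conv_lhs => rw [hM.spectral_theorem, Unitary.conjStarAlgAut_apply]
  rw [← mulVec_mulVec, ← mulVec_mulVec, dotProduct_mulVec, vecMul_eigenvectorUnitary]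
  simp only [dotProduct, mulVec_diagonal, Function.comp_apply, RCLike.ofReal_real_eq_id, id_eq]
  exact sum_congr rfl fun i _ => by ring

theorem dotProduct_self_eq_sum_sq (hM : M.IsHermitian) (x : ι → ℝ) :
    x ⬝ᵥ x = ∑ i, (star (hM.eigenvectorUnitary : Matrix ι ι ℝ) *ᵥ x) i ^ 2 := by
  have hU := (mem_unitaryGroup_iff).mp hM.eigenvectorUnitary.2
  nth_rewrite 2 [← one_mulVec x]
  rw [← hU, ← mulVec_mulVec, dotProduct_mulVec, vecMul_eigenvectorUnitary]
  simp only [dotProduct, sq]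

theorem dotProduct_mulVec_le_iSup_eigenvalues (hM : M.IsHermitian) (x : ι → ℝ) :
    x ⬝ᵥ M *ᵥ x ≤ (⨆ i, hM.eigenvalues i) * (x ⬝ᵥ x) := by
  rw [hM.dotProduct_mulVec_eq_sum_eigenvalues, hM.dotProduct_self_eq_sum_sq, mul_sum]
  gcongr with i
  exact le_ciSup (Set.finite_range _).bddAbove i

theorem iInf_eigenvalues_le_dotProduct_mulVec (hM : M.IsHermitian) (x : ι → ℝ) :
    (⨅ i, hM.eigenvalues i) * (x ⬝ᵥ x) ≤ x ⬝ᵥ M *ᵥ x := by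
  rw [hM.dotProduct_mulVec_eq_sum_eigenvalues, hM.dotProduct_self_eq_sum_sq, mul_sum]
  gcongr with i
  exact ciInf_le (Set.finite_range _).bddBelow i

theorem eigenvectorBasis_dotProduct_self (hM : M.IsHermitian) (i : ι) :
    ⇑(hM.eigenvectorBasis i) ⬝ᵥ ⇑(hM.eigenvectorBasis i) = 1 := by
  have h := real_inner_self_eq_norm_sq (hM.eigenvectorBasis i)
  rw [hM.eigenvectorBasis.orthonormal.1 i, one_pow, EuclideanSpace.inner_eq_star_dotProduct] at h
  simpa [dotProduct_comm] using h

theorem eigenvectorBasis_dotProduct_mulVec (hM : M.IsHermitian) (i : ι) :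
    ⇑(hM.eigenvectorBasis i) ⬝ᵥ M *ᵥ ⇑(hM.eigenvectorBasis i) = hM.eigenvalues i := by
  rw [hM.mulVec_eigenvectorBasis, dotProduct_smul, hM.eigenvectorBasis_dotProduct_self,
    smul_eq_mul, mul_one]

theorem exists_dotProduct_mulVec_eq_iSup_eigenvalues [Nonempty ι] (hM : M.IsHermitian) :
    ∃ x : ι → ℝ, x ⬝ᵥ x = 1 ∧ x ⬝ᵥ M *ᵥ x = ⨆ i, hM.eigenvalues i := by
  obtain ⟨i, hi⟩ := exists_eq_ciSup_of_finite (f := hM.eigenvalues)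
  exact ⟨_, hM.eigenvectorBasis_dotProduct_self i, hi ▸ hM.eigenvectorBasis_dotProduct_mulVec i⟩

theorem exists_dotProduct_mulVec_eq_iInf_eigenvalues [Nonempty ι] (hM : M.IsHermitian) :
    ∃ x : ι → ℝ, x ⬝ᵥ x = 1 ∧ x ⬝ᵥ M *ᵥ x = ⨅ i, hM.eigenvalues i := by
  obtain ⟨i, hi⟩ := exists_eq_ciInf_of_finite (f := hM.eigenvalues)
  exact ⟨_, hM.eigenvectorBasis_dotProduct_self i, hi ▸ hM.eigenvectorBasis_dotProduct_mulVec i⟩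

theorem iSup_eigenvalues_le_iff [Nonempty ι] (hM : M.IsHermitian) {c : ℝ} :
    (⨆ i, hM.eigenvalues i) ≤ c ↔ ∀ x : ι → ℝ, x ⬝ᵥ M *ᵥ x ≤ c * (x ⬝ᵥ x) := by
  refine ⟨fun h x => ?_, fun h => ?_⟩
  · exact (hM.dotProduct_mulVec_le_iSup_eigenvalues x).trans
      (mul_le_mul_of_nonneg_right h (dotProduct_self_star_nonneg x))
  · obtain ⟨x, hx, hMx⟩ := hM.exists_dotProduct_mulVec_eq_iSup_eigenvalues
    simpa [hx, hMx] using h x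

theorem le_iInf_eigenvalues_iff [Nonempty ι] (hM : M.IsHermitian) {c : ℝ} :
    c ≤ ⨅ i, hM.eigenvalues i ↔ ∀ x : ι → ℝ, c * (x ⬝ᵥ x) ≤ x ⬝ᵥ M *ᵥ x := by
  refine ⟨fun h x => ?_, fun h => ?_⟩
  · exact (mul_le_mul_of_nonneg_right h (dotProduct_self_star_nonneg x)).trans
      (hM.iInf_eigenvalues_le_dotProduct_mulVec x)
  · obtain ⟨x, hx, hMx⟩ := hM.exists_dotProduct_mulVec_eq_iInf_eigenvalues
    simpa [hx, hMx] using h x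

theorem iInf_eigenvalues_le_iSup_eigenvalues (hM : M.IsHermitian) :
    (⨅ i, hM.eigenvalues i) ≤ ⨆ i, hM.eigenvalues i := by
  cases isEmpty_or_nonempty ι
  · simp
  · exact ciInf_le_ciSup (Set.finite_range _).bddBelow (Set.finite_range _).bddAbove

theorem apply_self_le_iSup_eigenvalues (hM : M.IsHermitian) (i : ι) :
    M i i ≤ ⨆ j, hM.eigenvalues j := by
  simpa [mulVec_single_one] using hM.dotProduct_mulVec_le_iSup_eigenvalues (Pi.single i 1)

theorem iInf_eigenvalues_le_apply_self (hM : M.IsHermitian) (i : ι) :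
    (⨅ j, hM.eigenvalues j) ≤ M i i := by
  simpa [mulVec_single_one] using hM.iInf_eigenvalues_le_dotProduct_mulVec (Pi.single i 1)

theorem iSup_eigenvalues_add_le [Nonempty ι] (hM : M.IsHermitian) (hN : N.IsHermitian)
    (hMN : (M + N).IsHermitian) :
    (⨆ i, hMN.eigenvalues i) ≤ (⨆ i, hM.eigenvalues i) + ⨆ i, hN.eigenvalues i :=
  hMN.iSup_eigenvalues_le_iff.2 fun x => by
    rw [add_mulVec, dotProduct_add, add_mul]
    exact add_le_add (hM.dotProduct_mulVec_le_iSup_eigenvalues x)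
      (hN.dotProduct_mulVec_le_iSup_eigenvalues x)

theorem le_iInf_eigenvalues_add [Nonempty ι] (hM : M.IsHermitian) (hN : N.IsHermitian)
    (hMN : (M + N).IsHermitian) :
    (⨅ i, hM.eigenvalues i) + (⨅ i, hN.eigenvalues i) ≤ ⨅ i, hMN.eigenvalues i :=
  hMN.le_iInf_eigenvalues_iff.2 fun x => by
    rw [add_mulVec, dotProduct_add, add_mul]
    exact add_le_add (hM.iInf_eigenvalues_le_dotProduct_mulVec x)
      (hN.iInf_eigenvalues_le_dotProduct_mulVec x)

theorem le_iSup_eigenvalues_add [Nonempty ι] (hM : M.IsHermitian) (hN : N.IsHermitian)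
    (hMN : (M + N).IsHermitian) :
    (⨅ i, hM.eigenvalues i) + (⨆ i, hN.eigenvalues i) ≤ ⨆ i, hMN.eigenvalues i := by
  obtain ⟨x, hx, hNx⟩ := hN.exists_dotProduct_mulVec_eq_iSup_eigenvalues
  have hMx := hM.iInf_eigenvalues_le_dotProduct_mulVec x
  have hMNx := hMN.dotProduct_mulVec_le_iSup_eigenvalues x
  rw [hx, mul_one] at hMx hMNx
  rw [add_mulVec, dotProduct_add, hNx] at hMNx
  linarith

theorem iInf_eigenvalues_add_le [Nonempty ι] (hM : M.IsHermitian) (hN : N.IsHermitian)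
    (hMN : (M + N).IsHermitian) :
    (⨅ i, hMN.eigenvalues i) ≤ (⨆ i, hM.eigenvalues i) + ⨅ i, hN.eigenvalues i := by
  obtain ⟨x, hx, hNx⟩ := hN.exists_dotProduct_mulVec_eq_iInf_eigenvalues
  have hMx := hM.dotProduct_mulVec_le_iSup_eigenvalues x
  have hMNx := hMN.iInf_eigenvalues_le_dotProduct_mulVec x
  rw [hx, mul_one] at hMx hMNx
  rw [add_mulVec, dotProduct_add, hNx] at hMNx
  linarith

theorem iSup_eigenvalues_diagonal_le [Nonempty ι] {d : ι → ℝ} (hd : (diagonal d).IsHermitian)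
    {c : ℝ} (h : ∀ i, d i ≤ c) : (⨆ i, hd.eigenvalues i) ≤ c :=
  hd.iSup_eigenvalues_le_iff.2 fun x => by
    simp only [dotProduct, mulVec_diagonal, mul_sum]
    exact sum_le_sum fun i _ => by nlinarith [h i, mul_self_nonneg (x i)]

theorem le_iInf_eigenvalues_diagonal [Nonempty ι] {d : ι → ℝ} (hd : (diagonal d).IsHermitian)
    {c : ℝ} (h : ∀ i, c ≤ d i) : c ≤ ⨅ i, hd.eigenvalues i :=
  hd.le_iInf_eigenvalues_iff.2 fun x => by
    simp only [dotProduct, mulVec_diagonal, mul_sum]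
    exact sum_le_sum fun i _ => by nlinarith [h i, mul_self_nonneg (x i)]

end Matrix.IsHermitian

namespace SimpleGraph

variable {n : ℕ} {G : SimpleGraph (Fin n)} [DecidableRel G.Adj]

theorem signlessLaplacian_apply_self (i : Fin n) : signlessLaplacian G i i = G.degree i := by
  simp [signlessLaplacian]

variable [Nonempty (Fin n)]

theorem maxDegree_le_iSup_eigenvalues_signlessLaplacian
    (hQ : (signlessLaplacian G).IsHermitian) : (G.maxDegree : ℝ) ≤ ⨆ i, hQ.eigenvalues i := by
  obtain ⟨i, hi⟩ := G.exists_maximal_degree_vertex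
  simpa [signlessLaplacian_apply_self, hi] using hQ.apply_self_le_iSup_eigenvalues i

theorem iInf_eigenvalues_signlessLaplacian_le_minDegree
    (hQ : (signlessLaplacian G).IsHermitian) : (⨅ i, hQ.eigenvalues i) ≤ G.minDegree := by
  obtain ⟨i, hi⟩ := G.exists_minimal_degree_vertex
  simpa [signlessLaplacian_apply_self, hi] using hQ.iInf_eigenvalues_le_apply_self i

theorem iSup_eigenvalues_degMatrix_le (hD : (G.degMatrix ℝ).IsHermitian) :
    (⨆ i, hD.eigenvalues i) ≤ G.maxDegree :=
  hD.iSup_eigenvalues_diagonal_le fun i => Nat.cast_le.2 (G.degree_le_maxDegree i)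

theorem minDegree_le_iInf_eigenvalues_degMatrix (hD : (G.degMatrix ℝ).IsHermitian) :
    G.minDegree ≤ ⨅ i, hD.eigenvalues i :=
  hD.le_iInf_eigenvalues_diagonal fun i => Nat.cast_le.2 (G.minDegree_le_degree i)

variable (hA : (G.adjMatrix ℝ).IsHermitian) (hQ : (signlessLaplacian G).IsHermitian)

theorem iSup_eigenvalues_signlessLaplacian_le :
    (⨆ i, hQ.eigenvalues i) ≤ G.maxDegree + ⨆ i, hA.eigenvalues i :=
  ((G.isHermitian_degMatrix ℝ).iSup_eigenvalues_add_le hA hQ).trans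
    (add_le_add_left (G.iSup_eigenvalues_degMatrix_le _) _)

theorem minDegree_add_le_iInf_eigenvalues_signlessLaplacian :
    G.minDegree + (⨅ i, hA.eigenvalues i) ≤ ⨅ i, hQ.eigenvalues i :=
  (add_le_add_left (G.minDegree_le_iInf_eigenvalues_degMatrix _) _).trans
    ((G.isHermitian_degMatrix ℝ).le_iInf_eigenvalues_add hA hQ)

theorem minDegree_add_le_iSup_eigenvalues_signlessLaplacian :
    G.minDegree + (⨆ i, hA.eigenvalues i) ≤ ⨆ i, hQ.eigenvalues i :=
  (add_le_add_left (G.minDegree_le_iInf_eigenvalues_degMatrix _) _).trans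
    ((G.isHermitian_degMatrix ℝ).le_iSup_eigenvalues_add hA hQ)

theorem iInf_eigenvalues_signlessLaplacian_le :
    (⨅ i, hQ.eigenvalues i) ≤ G.maxDegree + ⨅ i, hA.eigenvalues i :=
  ((G.isHermitian_degMatrix ℝ).iInf_eigenvalues_add_le hA hQ).trans
    (add_le_add_left (G.iSup_eigenvalues_degMatrix_le _) _)

end SimpleGraph

theorem spread_Q_between {n : ℕ} (G : SimpleGraph (Fin n)) [DecidableRel G.Adj]
    (hA : (G.adjMatrix ℝ).IsHermitian) (hQ : (signlessLaplacian G).IsHermitian) :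
    |(G.maxDegree : ℝ) - (G.minDegree : ℝ) - spread hA| ≤ spread hQ ∧
      spread hQ ≤ spread hA + (G.maxDegree : ℝ) - (G.minDegree : ℝ) := by
  cases isEmpty_or_nonempty (Fin n)
  · simp [spread, SimpleGraph.maxDegree_of_subsingleton, SimpleGraph.minDegree_of_subsingleton]
  have hq₁_le := G.iSup_eigenvalues_signlessLaplacian_le hA hQ
  have hq₁_ge := G.minDegree_add_le_iSup_eigenvalues_signlessLaplacian hA hQ
  have hqₙ_le := G.iInf_eigenvalues_signlessLaplacian_le hA hQ
  have hqₙ_ge := G.minDegree_add_le_iInf_eigenvalues_signlessLaplacian hA hQ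
  have hΔ_le_q₁ := G.maxDegree_le_iSup_eigenvalues_signlessLaplacian hQ
  have hqₙ_le_δ := G.iInf_eigenvalues_signlessLaplacian_le_minDegree hQ
  have hA_min_le_max := hA.iInf_eigenvalues_le_iSup_eigenvalues
  unfold spread
  refine ⟨abs_le.2 ⟨?_, ?_⟩, ?_⟩ <;> linarith
end

section
/- Let G be a simple graph on n vertices with independence number α(G). Then the edge bipartiteness ε_b(G) satisfies ε_b(G) ≤ (n - α(G))(n - α(G) - 1)/2. -/
open Matrix

/-- The independence number: the largest cardinality of an independent set of vertices. -/
noncomputable def indepNumber {n : ℕ} (G : SimpleGraph (Fin n)) : ℕ :=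
  sSup {k | ∃ s : Finset (Fin n), (∀ a ∈ s, ∀ b ∈ s, a ≠ b → ¬ G.Adj a b) ∧ s.card = k}

/-- The edge bipartiteness: the minimum number of edges whose deletion yields a
bipartite graph. -/
noncomputable def edgeBipartiteness {n : ℕ} (G : SimpleGraph (Fin n)) : ℕ :=
  sInf {k | ∃ s : Finset (Sym2 (Fin n)), s.card = k ∧ ↑s ⊆ G.edgeSet ∧
    (G.deleteEdges ↑s).Colorable 2}

/-!
Let `s` be a maximum independent set of `G`. Deleting every edge of `G` with both ends outside
`s` leaves a graph in which `s` and its complement are both independent, i.e. a bipartite graph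
with bipartition `(s, sᶜ)`. The deleted edges all lie inside `sᶜ`, a set of `n - α(G)` vertices,
so there are at most `(n - α(G)).choose 2` of them.
-/

open Finset

namespace SimpleGraph

variable {V : Type*} {G : SimpleGraph V}

theorem isBipartiteWith_deleteEdges_sym2_compl {s : Set V} (hs : G.IsIndepSet s) :
    (G.deleteEdges sᶜ.sym2).IsBipartiteWith s sᶜ where
  disjoint := disjoint_compl_right
  mem_of_adj a b hab := by
    rw [deleteEdges_adj, Set.mk_mem_sym2_iff] at hab
    by_cases ha : a ∈ s <;> by_cases hb : b ∈ s
    · exact absurd hab.1 (hs ha hb hab.1.ne)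
    · exact .inl ⟨ha, hb⟩
    · exact .inr ⟨ha, hb⟩
    · exact absurd ⟨ha, hb⟩ hab.2

variable [Fintype V] [DecidableEq V] [DecidableRel G.Adj]

theorem isBipartite_deleteEdges_edgeFinset_inter_sym2_compl {s : Finset V}
    (hs : G.IsIndepSet s) : (G.deleteEdges ↑(G.edgeFinset ∩ sᶜ.sym2)).IsBipartite := by
  rw [coe_inter, coe_edgeFinset, Set.inter_comm, coe_sym2, coe_compl,
    ← deleteEdges_eq_inter_edgeSet]
  exact (isBipartiteWith_deleteEdges_sym2_compl hs).isBipartite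

theorem card_edgeFinset_inter_sym2_le (s : Finset V) :
    #(G.edgeFinset ∩ s.sym2) ≤ (#s).choose 2 := by
  rw [← filter_edgeFinset_toFinset_subset, card_filter_edgeFinset_toFinset_subset]
  exact card_edgeFinset_le_card_choose_two.trans_eq (by simp)

end SimpleGraph

theorem indepNumber_eq_indepNum {n : ℕ} (G : SimpleGraph (Fin n)) :
    indepNumber G = G.indepNum := by
  simp only [indepNumber, SimpleGraph.indepNum, SimpleGraph.isNIndepSet_iff,
    SimpleGraph.IsIndepSet, Set.Pairwise, mem_coe]

theorem edgeBipartiteness_le_card {n : ℕ} {G : SimpleGraph (Fin n)} {t : Finset (Sym2 (Fin n))}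
    (ht : ↑t ⊆ G.edgeSet) (hG : (G.deleteEdges ↑t).IsBipartite) :
    edgeBipartiteness G ≤ #t :=
  Nat.sInf_le ⟨t, rfl, ht, hG⟩

theorem edgeBipartiteness_le {n : ℕ} (G : SimpleGraph (Fin n)) :
    edgeBipartiteness G ≤ (n - indepNumber G) * (n - indepNumber G - 1) / 2 := by
  classical
  obtain ⟨s, hs_indep, hs_card⟩ := G.exists_isNIndepSet_indepNum
  calc edgeBipartiteness G ≤ #(G.edgeFinset ∩ sᶜ.sym2) :=
        edgeBipartiteness_le_card (by simp)
          (G.isBipartite_deleteEdges_edgeFinset_inter_sym2_compl hs_indep)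
    _ ≤ (#sᶜ).choose 2 := G.card_edgeFinset_inter_sym2_le sᶜ
    _ = _ := by
        rw [card_compl, Fintype.card_fin, hs_card, indepNumber_eq_indepNum, Nat.choose_two_right]
end

section
/- Let G be a simple graph with maximum degree Δ and minimum degree δ. If Δ - δ ≥ 2 then s_Q(G) ≥ sqrt((Δ-δ)² + 2Δ + 2δ), and if Δ - δ ≤ 1 then s_Q(G) ≥ 2√Δ. -/
/-!
If the eigenvalues of a real symmetric matrix `A` lie in `[m, M]`, then with `c = (M + m) / 2`
the matrix `(M - m)² / 4 - (A - c)²` is positive semidefinite, so every row of `A - c` has squared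
norm at most `s² / 4`, where `s = M - m` is the spread. Adding this for two rows `i`, `j` and using
`(a - c)² + (b - c)² ≥ (a - b)² / 2` gives the Barnes–Hoffman bound. For the signless Laplacian the
row of a vertex `v` contributes `d(v)` on the diagonal and `d(v)` off it; taking `i`, `j` to be
vertices of degree `Δ` and `δ` gives the first bound, and `i = j` of degree `Δ` the second.
-/

open Matrix

open Finset
open scoped MatrixOrder

theorem Matrix.IsHermitian.sum_sq_sub_smul_one_apply_le {ι : Type*} [Fintype ι] [DecidableEq ι]
    {A : Matrix ι ι ℝ} (hA : A.IsHermitian) {c r : ℝ} (h : ∀ k, (hA.eigenvalues k - c) ^ 2 ≤ r)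
    (i : ι) : ∑ j, ((A - c • 1) i j) ^ 2 ≤ r := by
  set B := A - c • 1
  have hB : B.IsHermitian := hA.sub (isHermitian_one.smul (IsSelfAdjoint.all c))
  have hBsq : B ^ 2 ≤ algebraMap ℝ _ r := by
    have hcfc : cfc (fun x => (x - c) ^ 2) A = B ^ 2 := by
      rw [cfc_pow .., cfc_sub .., cfc_id' .., cfc_const .., Algebra.algebraMap_eq_smul_one]
    rw [← hcfc]
    refine cfc_le_algebraMap _ _ _ fun x hx => ?_
    obtain ⟨k, rfl⟩ := hA.spectrum_real_eq_range_eigenvalues ▸ hx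
    exact h k
  have hdiag : (B ^ 2) i i = ∑ j, (B i j) ^ 2 := by
    simp only [sq, mul_apply, ← hB.apply _ i, star_trivial]
  have := (Matrix.le_iff.mp hBsq).diag_nonneg (i := i)
  rw [sub_apply, hdiag, Algebra.algebraMap_eq_smul_one, smul_apply, one_apply_eq,
    smul_eq_mul, mul_one] at this
  linarith

section Spread

variable {n : ℕ} {A : Matrix (Fin n) (Fin n) ℝ} (hA : A.IsHermitian)

theorem spread_nonneg : 0 ≤ spread hA := by
  rcases isEmpty_or_nonempty (Fin n) with h | h
  · simp [spread, Real.iSup_of_isEmpty, Real.iInf_of_isEmpty]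
  · exact sub_nonneg.mpr <|
      ciInf_le_ciSup (Set.finite_range _).bddBelow (Set.finite_range _).bddAbove

theorem sq_eigenvalues_sub_midpoint_le (k : Fin n) :
    (hA.eigenvalues k - ((⨆ i, hA.eigenvalues i) + ⨅ i, hA.eigenvalues i) / 2) ^ 2
      ≤ (spread hA / 2) ^ 2 := by
  have hle := le_ciSup (Set.finite_range hA.eigenvalues).bddAbove k
  have hge := ciInf_le (Set.finite_range hA.eigenvalues).bddBelow k
  rw [spread]
  nlinarith

theorem sq_sub_add_sum_sq_offDiag_le_spread_sq (i j : Fin n) :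
    (A i i - A j j) ^ 2 + 2 * ∑ s ∈ univ.erase j, (A j s) ^ 2
      + 2 * ∑ s ∈ univ.erase i, (A i s) ^ 2 ≤ spread hA ^ 2 := by
  set c := ((⨆ i, hA.eigenvalues i) + ⨅ i, hA.eigenvalues i) / 2
  have hrow (i : Fin n) :
      (A i i - c) ^ 2 + ∑ s ∈ univ.erase i, (A i s) ^ 2 ≤ (spread hA / 2) ^ 2 := by
    have := hA.sum_sq_sub_smul_one_apply_le (sq_eigenvalues_sub_midpoint_le hA) i
    rw [← add_sum_erase _ _ (mem_univ i)] at this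
    convert this using 2
    · simp [c]
    · refine sum_congr rfl fun s hs => ?_
      simp [one_apply_ne (ne_of_mem_erase hs).symm]
  nlinarith [hrow i, hrow j, sq_nonneg (A i i + A j j - 2 * c)]

end Spread

section SignlessLaplacian

variable {n : ℕ} (G : SimpleGraph (Fin n)) [DecidableRel G.Adj]

theorem signlessLaplacian_apply_self (i : Fin n) : signlessLaplacian G i i = G.degree i := by
  simp [signlessLaplacian]

theorem sum_sq_signlessLaplacian_offDiag (i : Fin n) :
    ∑ s ∈ univ.erase i, (signlessLaplacian G i s) ^ 2 = G.degree i := by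
  have hoff : ∀ s ∈ univ.erase i, signlessLaplacian G i s ^ 2 = if G.Adj i s then 1 else 0 := by
    intro s hs
    simp [signlessLaplacian, diagonal_apply_ne _ (ne_of_mem_erase hs).symm,
      SimpleGraph.adjMatrix_apply]
  rw [sum_congr rfl hoff, sum_erase _ (by simp), sum_boole, ← G.card_neighborFinset_eq_degree,
    G.neighborFinset_eq_filter]

end SignlessLaplacian

theorem spread_Q_degree_lower_bounds {n : ℕ} (G : SimpleGraph (Fin n)) [DecidableRel G.Adj]
    (hm : 0 < G.edgeFinset.card) (hQ : (signlessLaplacian G).IsHermitian) :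
    (G.minDegree + 2 ≤ G.maxDegree →
      spread hQ ≥ Real.sqrt (((G.maxDegree : ℝ) - (G.minDegree : ℝ)) ^ 2
        + 2 * (G.maxDegree : ℝ) + 2 * (G.minDegree : ℝ))) ∧
    (G.maxDegree ≤ G.minDegree + 1 →
      spread hQ ≥ 2 * Real.sqrt (G.maxDegree : ℝ)) := by
  obtain ⟨e, -⟩ := card_pos.mp hm
  have : Nonempty (Fin n) := ⟨e.out.1⟩
  obtain ⟨vmax, hvmax⟩ := G.exists_maximal_degree_vertex
  obtain ⟨vmin, hvmin⟩ := G.exists_minimal_degree_vertex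
  have hbound (i j : Fin n) := sq_sub_add_sum_sq_offDiag_le_spread_sq hQ i j
  simp only [signlessLaplacian_apply_self, sum_sq_signlessLaplacian_offDiag] at hbound
  have hs := spread_nonneg hQ
  refine ⟨fun _ => ?_, fun _ => ?_⟩
  · rw [ge_iff_le, Real.sqrt_le_left hs, hvmax, hvmin]
    linarith [hbound vmax vmin]
  · rw [ge_iff_le, ← pow_le_pow_iff_left₀ (by positivity) hs two_ne_zero, mul_pow,
      Real.sq_sqrt (Nat.cast_nonneg _), hvmax]
    linarith [hbound vmax vmax]
end

section
/- Let G be a connected simple graph with n ≥ 2 vertices and m edges. Then s_Q(G) ≥ (2/n)·sqrt(n·M₁(G) - 4m² + 2mn), where M₁(G) = Σᵢ dᵢ² is the first Zagreb index. -/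
/-! The eigenvalues of `Q` sum to `tr Q = 2m` and their squares to `tr Q² = M₁(G) + 2m`, so the
radicand is `n²` times the variance of the spectrum of `Q`. Popoviciu's inequality bounds that
variance by a quarter of the squared spread. -/

open Matrix

open Finset

/-- Popoviciu's inequality on variances. -/
theorem card_mul_sum_sq_sub_sq_sum_le {ι : Type*} (s : Finset ι) {x : ι → ℝ} {m M : ℝ}
    (hm : ∀ i ∈ s, m ≤ x i) (hM : ∀ i ∈ s, x i ≤ M) :
    #s * ∑ i ∈ s, x i ^ 2 - (∑ i ∈ s, x i) ^ 2 ≤ (#s * (M - m) / 2) ^ 2 := by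
  have hprod : 0 ≤ ∑ i ∈ s, (M - x i) * (x i - m) :=
    sum_nonneg fun i hi => mul_nonneg (sub_nonneg.2 (hM i hi)) (sub_nonneg.2 (hm i hi))
  have hexpand : ∑ i ∈ s, (M - x i) * (x i - m)
      = (M + m) * ∑ i ∈ s, x i - #s * (M * m) - ∑ i ∈ s, x i ^ 2 := by
    simp only [mul_sum, ← nsmul_eq_mul, ← sum_const, ← sum_sub_distrib]
    exact sum_congr rfl fun i _ => by ring
  have hcard : (0 : ℝ) ≤ #s := Nat.cast_nonneg _
  nlinarith [mul_nonneg hcard hprod, sq_nonneg (∑ i ∈ s, x i - #s * (M + m) / 2)]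

namespace Matrix.IsHermitian

theorem trace_mul_self_eq_sum_eigenvalues_sq {n 𝕜 : Type*} [Fintype n] [DecidableEq n]
    [RCLike 𝕜] {A : Matrix n n 𝕜} (hA : A.IsHermitian) :
    (A * A).trace = ∑ i, (hA.eigenvalues i : 𝕜) ^ 2 := by
  conv_lhs => rw [hA.spectral_theorem]
  rw [← map_mul, Unitary.conjStarAlgAut_apply, trace_mul_cycle, Unitary.coe_star_mul_self,
    one_mul, diagonal_mul_diagonal, trace_diagonal]
  simp [sq]

variable {n : ℕ} {A : Matrix (Fin n) (Fin n) ℝ}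

theorem spread_nonneg (hA : A.IsHermitian) : 0 ≤ spread hA := by
  rcases isEmpty_or_nonempty (Fin n) with _ | _
  · simp [spread]
  · exact sub_nonneg.2 <| ciInf_le_ciSup (Set.finite_range _).bddBelow (Set.finite_range _).bddAbove

theorem card_mul_trace_mul_self_sub_sq_trace_le (hA : A.IsHermitian) :
    n * (A * A).trace - A.trace ^ 2 ≤ (n * spread hA / 2) ^ 2 := by
  have h := card_mul_sum_sq_sub_sq_sum_le univ (x := hA.eigenvalues)
    (fun i _ => ciInf_le (Set.finite_range _).bddBelow i)
    (fun i _ => le_ciSup (Set.finite_range _).bddAbove i)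
  simpa [hA.trace_mul_self_eq_sum_eigenvalues_sq, hA.trace_eq_sum_eigenvalues, spread] using h

theorem two_div_card_mul_sqrt_le_spread (hA : A.IsHermitian) :
    2 / n * √(n * (A * A).trace - A.trace ^ 2) ≤ spread hA := by
  rcases n.eq_zero_or_pos with rfl | hn
  · simpa using hA.spread_nonneg
  have hsqrt : √(n * (A * A).trace - A.trace ^ 2) ≤ n * spread hA / 2 :=
    (Real.sqrt_le_sqrt hA.card_mul_trace_mul_self_sub_sq_trace_le).trans_eq
      (Real.sqrt_sq (by have := hA.spread_nonneg; positivity))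
  calc 2 / n * √(n * (A * A).trace - A.trace ^ 2) ≤ 2 / n * (n * spread hA / 2) := by gcongr
    _ = spread hA := by field_simp

end Matrix.IsHermitian

namespace SimpleGraph

variable {n : ℕ} (G : SimpleGraph (Fin n)) [DecidableRel G.Adj]

theorem sum_degrees_real_eq_twice_card_edges : ∑ i, (G.degree i : ℝ) = 2 * #G.edgeFinset :=
  mod_cast G.sum_degrees_eq_twice_card_edges

theorem trace_signlessLaplacian : (signlessLaplacian G).trace = 2 * #G.edgeFinset := by
  simp [signlessLaplacian, trace_add, G.sum_degrees_real_eq_twice_card_edges]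

theorem trace_signlessLaplacian_mul_self :
    (signlessLaplacian G * signlessLaplacian G).trace
      = ∑ i, (G.degree i : ℝ) ^ 2 + 2 * #G.edgeFinset := by
  have hDA : (diagonal (fun i => (G.degree i : ℝ)) * G.adjMatrix ℝ).trace = 0 := by
    simp only [trace, diag_apply, diagonal_mul, adjMatrix_apply, G.irrefl, if_false, mul_zero,
      sum_const_zero]
  have hAA : (G.adjMatrix ℝ * G.adjMatrix ℝ).trace = 2 * #G.edgeFinset := by
    simp only [trace, diag_apply, adjMatrix_mul_self_apply_self]
    exact G.sum_degrees_real_eq_twice_card_edges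
  simp only [signlessLaplacian, add_mul, mul_add, trace_add, trace_mul_comm (G.adjMatrix ℝ), hDA,
    hAA, diagonal_mul_diagonal, trace_diagonal]
  simp [sq]

end SimpleGraph

theorem spread_Q_zagreb_lower_bound_general {n : ℕ}
    (G : SimpleGraph (Fin n)) [DecidableRel G.Adj]
    (hQ : (signlessLaplacian G).IsHermitian) :
    spread hQ ≥ (2 / (n : ℝ)) * Real.sqrt ((n : ℝ) * (∑ i, (G.degree i : ℝ) ^ 2)
      - 4 * (G.edgeFinset.card : ℝ) ^ 2 + 2 * (G.edgeFinset.card : ℝ) * n) := by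
  have h := hQ.two_div_card_mul_sqrt_le_spread
  rw [G.trace_signlessLaplacian_mul_self, G.trace_signlessLaplacian] at h
  convert h using 4
  ring

theorem spread_Q_zagreb_lower_bound {n : ℕ} (hn : 2 ≤ n)
    (G : SimpleGraph (Fin n)) [DecidableRel G.Adj] (hG : G.Connected)
    (hQ : (signlessLaplacian G).IsHermitian) :
    spread hQ ≥ (2 / (n : ℝ)) * Real.sqrt ((n : ℝ) * (∑ i, (G.degree i : ℝ) ^ 2)
      - 4 * (G.edgeFinset.card : ℝ) ^ 2 + 2 * (G.edgeFinset.card : ℝ) * n) :=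
  spread_Q_zagreb_lower_bound_general G hQ
end

section
/- For a nonzero vector y ∈ R^n and real symmetric matrix A with τ = Ay, s(A) ≥ 2·sqrt((Σyᵢ²)(Στᵢ²) - (Σyᵢτᵢ)²)/(Σyᵢ²). -/
/-!
If the spectrum of a symmetric operator `T` lies in `[m, M]`, then in an orthonormal eigenbasis
`⟪T x - m x, M x - T x⟫ = ∑ (λᵢ - m) (M - λᵢ) cᵢ² ≥ 0`, that is
`‖T x‖² ≤ (M + m) ⟪x, T x⟫ - M m ‖x‖²`. Multiplying by `‖x‖²` and completing the square in
`⟪x, T x⟫` gives `‖x‖² ‖T x‖² - ⟪x, T x⟫² ≤ ((M - m) ‖x‖² / 2)²`; for a matrix, take `m` and `M`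
to be its extreme eigenvalues.
-/
open Matrix

namespace LinearMap.IsSymmetric

variable {E : Type*} [NormedAddCommGroup E] [InnerProductSpace ℝ E] [FiniteDimensional ℝ E]
  {T : E →ₗ[ℝ] E} {m M : ℝ}

theorem inner_sub_smul_smul_sub_nonneg (hT : T.IsSymmetric)
    (hspec : spectrum ℝ T ⊆ Set.Icc m M) (x : E) :
    0 ≤ inner ℝ (T x - m • x) (M • x - T x) := by
  rw [← (hT.eigenvectorBasis rfl).repr.inner_map_map, PiLp.inner_apply]
  refine Finset.sum_nonneg fun i _ => ?_
  obtain ⟨hm, hM⟩ := hspec (hT.hasEigenvalue_eigenvalues rfl i).mem_spectrum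
  simp only [map_sub, map_smul, PiLp.sub_apply, PiLp.smul_apply, smul_eq_mul,
    hT.eigenvectorBasis_apply_self_apply, RCLike.inner_apply, conj_trivial]
  nlinarith [mul_nonneg (mul_nonneg (sub_nonneg.2 hm) (sub_nonneg.2 hM))
    (sq_nonneg ((hT.eigenvectorBasis rfl).repr x i))]

theorem norm_sq_mul_norm_sq_sub_inner_sq_le (hT : T.IsSymmetric)
    (hspec : spectrum ℝ T ⊆ Set.Icc m M) (x : E) :
    ‖x‖ ^ 2 * ‖T x‖ ^ 2 - inner ℝ x (T x) ^ 2 ≤ ((M - m) * ‖x‖ ^ 2 / 2) ^ 2 := by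
  have h := hT.inner_sub_smul_smul_sub_nonneg hspec x
  simp only [inner_sub_left, inner_sub_right, real_inner_smul_left, real_inner_smul_right,
    real_inner_self_eq_norm_sq, real_inner_comm x (T x)] at h
  nlinarith [mul_nonneg h (sq_nonneg ‖x‖), sq_nonneg (inner ℝ x (T x) - (M + m) * ‖x‖ ^ 2 / 2)]

theorem two_mul_sqrt_norm_sq_mul_norm_sq_sub_inner_sq_div_le (hT : T.IsSymmetric)
    (hspec : spectrum ℝ T ⊆ Set.Icc m M) {x : E} (hx : x ≠ 0) :
    2 * √(‖x‖ ^ 2 * ‖T x‖ ^ 2 - inner ℝ x (T x) ^ 2) / ‖x‖ ^ 2 ≤ M - m := by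
  have : Nontrivial E := ⟨⟨x, 0, hx⟩⟩
  have hmM : m ≤ M :=
    have ⟨hm, hM⟩ := hspec (hT.hasEigenvalue_eigenvalues rfl ⟨0, Module.finrank_pos⟩).mem_spectrum
    hm.trans hM
  have hx2 : 0 < ‖x‖ ^ 2 := by positivity
  rw [div_le_iff₀ hx2, ← le_div_iff₀' two_pos, Real.sqrt_le_left (by positivity)]
  exact hT.norm_sq_mul_norm_sq_sub_inner_sq_le hspec x

end LinearMap.IsSymmetric

theorem Matrix.IsHermitian.spectrum_real_subset_Icc {𝕜 n : Type*} [RCLike 𝕜] [Fintype n]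
    [DecidableEq n] {A : Matrix n n 𝕜} (hA : A.IsHermitian) :
    spectrum ℝ A ⊆ Set.Icc (⨅ i, hA.eigenvalues i) (⨆ i, hA.eigenvalues i) := by
  rw [hA.spectrum_real_eq_range_eigenvalues]
  rintro _ ⟨i, rfl⟩
  exact ⟨ciInf_le (Set.finite_range _).bddBelow i, le_ciSup (Set.finite_range _).bddAbove i⟩

theorem spread_lower_bound_vec {n : ℕ} (A : Matrix (Fin n) (Fin n) ℝ) (hA : A.IsHermitian)
    (y : Fin n → ℝ) (hy : y ≠ 0) :
    spread hA ≥ 2 * Real.sqrt ((∑ i, (y i) ^ 2) * (∑ i, (A.mulVec y i) ^ 2)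
      - (∑ i, y i * A.mulVec y i) ^ 2) / (∑ i, (y i) ^ 2) := by
  have hT := isSymmetric_toEuclideanLin_iff.mpr hA
  have hspec : spectrum ℝ (toEuclideanLin A) ⊆
      Set.Icc (⨅ i, hA.eigenvalues i) (⨆ i, hA.eigenvalues i) := by
    rw [spectrum_toLpLin]
    exact hA.spectrum_real_subset_Icc
  have hy' : WithLp.toLp 2 y ≠ 0 := by simpa using hy
  have key := hT.two_mul_sqrt_norm_sq_mul_norm_sq_sub_inner_sq_div_le hspec hy'
  simpa [spread, EuclideanSpace.real_norm_sq_eq, EuclideanSpace.inner_toLp_toLp, dotProduct,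
    mul_comm] using key
end
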